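/- Suppose M/K is obtained by strong general magnification from L/K through J/K. Let L = N_0 ⊋ N_1 ⊋ ⋯ ⊋ N_k and J = N'_0 ⊋ N'_1 ⊋ ⋯ ⊋ N'_{k'} be the unique descending chains of L/K and J/K, and let K = F_0 ⊊ F_1 ⊊ ⋯ ⊊ F_l and K = F'_0 ⊊ F'_1 ⊊ ⋯ ⊊ F'_{l'} be the unique ascending chains of L/K and J/K; extend the shorter chains constantly (N'_i = N'_{k'} for i > k', etc.). Then the unique descending chain of M/K is M = N_0N'_0 ⊋ N_1N'_1 ⊋ ⋯ ⊋ N_{max(k,k')}N'_{max(k,k')}, with i-th field N_iN'_i, and the unique ascending chain of M/K is K = F_0F'_0 ⊊ F_1F'_1 ⊊ ⋯ ⊊ F_{max(l,l')}F'_{max(l,l')}, with j-th field F_jF'_j. -/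

import Mathlib

open IntermediateField Module

section Defs

variable (K Kbar : Type*) [Field K] [Field Kbar] [Algebra K Kbar]

/-- The Galois closure inside the ambient field `Kbar` of an intermediate field `L` of
`Kbar / K`: the compositum of all the `K`-conjugates of `L` in `Kbar`. -/
noncomputable def galClosure (L : IntermediateField K Kbar) : IntermediateField K Kbar :=
  ⨆ f : ↥L →ₐ[K] Kbar, f.fieldRange

/-- The subgroup `H = Gal(L̃/L)` of `G = Gal(L̃/K)`. -/
noncomputable def fixSub (L : IntermediateField K Kbar) :
    Subgroup (↥(galClosure K Kbar L) ≃ₐ[K] ↥(galClosure K Kbar L)) :=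
  (IntermediateField.comap (galClosure K Kbar L).val L).fixingSubgroup

/-- The cluster size `r_K(L) = [N_G(H) : H]`. -/
noncomputable def clusterSize (L : IntermediateField K Kbar) : ℕ :=
  (fixSub K Kbar L).relIndex (Subgroup.normalizer (fixSub K Kbar L : Set (↥(galClosure K Kbar L) ≃ₐ[K] ↥(galClosure K Kbar L))))

/-- The number of clusters `s_K(L) = [G : N_G(H)]`. -/
noncomputable def numClusters (L : IntermediateField K Kbar) : ℕ :=
  (Subgroup.normalizer (fixSub K Kbar L : Set (↥(galClosure K Kbar L) ≃ₐ[K] ↥(galClosure K Kbar L)))).index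

/-- The ascending index `t_K(L) = [G : H^G]`. -/
noncomputable def ascIndex (L : IntermediateField K Kbar) : ℕ :=
  (Subgroup.normalClosure (fixSub K Kbar L :
      Set (↥(galClosure K Kbar L) ≃ₐ[K] ↥(galClosure K Kbar L)))).index

/-- The quantity `u_K(L) = [H^G : H]`. -/
noncomputable def uIndex (L : IntermediateField K Kbar) : ℕ :=
  (fixSub K Kbar L).relIndex (Subgroup.normalClosure (fixSub K Kbar L :
      Set (↥(galClosure K Kbar L) ≃ₐ[K] ↥(galClosure K Kbar L))))

/-- `M/K` is obtained by strong cluster magnification from `L/K` through `F/K`. -/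
def IsSCMvia (M L F : IntermediateField K Kbar) : Prop :=
  L ≤ M ∧ 2 < Module.finrank K ↥L ∧ FiniteDimensional K ↥F ∧ IsGalois K ↥F ∧
    galClosure K Kbar L ⊓ F = ⊥ ∧ L ⊔ F = M

/-- `M/K` is primitive: it is not obtained by a nontrivial strong cluster magnification
from any subextension over `K`. -/
def IsPrimitive (M : IntermediateField K Kbar) : Prop :=
  ¬ ∃ L F : IntermediateField K Kbar, IsSCMvia K Kbar M L F ∧ F ≠ ⊥

/-- `M/K` is obtained by strong general magnification from `L/K` through `J/K`. -/
def IsSGMvia (M L J : IntermediateField K Kbar) : Prop :=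
  L ≤ M ∧ 1 < Module.finrank K ↥L ∧ FiniteDimensional K ↥J ∧
    galClosure K Kbar L ⊓ galClosure K Kbar J = ⊥ ∧ L ⊔ J = M

/-- `M/K` is general primitive: not obtained by a nontrivial strong general magnification
from any subextension over `K`. -/
def IsGeneralPrimitive (M : IntermediateField K Kbar) : Prop :=
  ¬ ∃ L J : IntermediateField K Kbar, IsSGMvia K Kbar M L J ∧ J ≠ ⊥

/-- `F/E` is a Galois pair of intermediate fields: `E ≤ F` and `F/E` is Galois. -/
def IsGaloisPair (E F : IntermediateField K Kbar) : Prop :=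
  ∃ h : E ≤ F, IsGalois ↥E ↥(IntermediateField.extendScalars h)

/-- One step of the unique descending chain: `N'` is an intermediate field of `N/K` such
that `N/N'` is Galois of maximal possible degree. -/
def DescStep (N N' : IntermediateField K Kbar) : Prop :=
  N' ≤ N ∧ IsGaloisPair K Kbar N' N ∧
    ∀ N'' : IntermediateField K Kbar, N'' ≤ N → IsGaloisPair K Kbar N'' N →
      Module.finrank K ↥N' ≤ Module.finrank K ↥N''

/-- One step of the unique ascending chain for `L/K`: `F'` is an intermediate field of
`L/F` such that `F'/F` is Galois of maximal possible degree. -/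
def AscStep (L F F' : IntermediateField K Kbar) : Prop :=
  F ≤ F' ∧ F' ≤ L ∧ IsGaloisPair K Kbar F F' ∧
    ∀ F'' : IntermediateField K Kbar, F ≤ F'' → F'' ≤ L → IsGaloisPair K Kbar F F'' →
      Module.finrank K ↥F'' ≤ Module.finrank K ↥F'

/-- `E` occurs in the unique descending chain of `L/K`. -/
def InDescChain (L E : IntermediateField K Kbar) : Prop :=
  Relation.ReflTransGen (DescStep K Kbar) L E

/-- `E` occurs in the unique ascending chain of `L/K`. -/
def InAscChain (L E : IntermediateField K Kbar) : Prop :=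
  Relation.ReflTransGen (AscStep K Kbar L) ⊥ E

end Defs

/-!
Write `T = L̃` and `U = J̃`. As `T/K` is finite Galois and `T ∩ U = K`, the fields `T` and `U`
are linearly disjoint, so for `X ≤ T` and `Y ≤ U` one has `[XY : K] = [X : K][Y : K]` and
`T ∩ XY = X`, `U ∩ XY = Y`; in particular `XY` determines `X` and `Y`, which makes the composite
chains strict. A pair `C ≤ X` is Galois iff `X` is stable under `Gal(K̄/C)`, and an automorphism
fixing `T ∩ Z` agrees on `T` with one fixing `Z`. Hence intersecting with `T` (resp. `U`) turns a
Galois subextension of a compositum into one of the `L`-side (resp. `J`-side) field, and comparing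
degrees shows that the composita of the maximal Galois steps are again maximal.
-/

namespace IntermediateField

variable {K Kbar : Type*} [Field K] [Field Kbar] [Algebra K Kbar]

theorem finiteDimensional_of_le {X Y : IntermediateField K Kbar} [FiniteDimensional K Y]
    (h : X ≤ Y) : FiniteDimensional K X :=
  .of_injective (inclusion h).toLinearMap (inclusion h).injective

namespace LinearDisjoint

variable {T U X Y X' Y' : IntermediateField K Kbar} [FiniteDimensional K T] [FiniteDimensional K U]

theorem inf_sup_eq_left (h : T.LinearDisjoint U) (hX : X ≤ T) (hY : Y ≤ U) :
    T ⊓ (X ⊔ Y) = X := by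
  have hXD : X ≤ T ⊓ (X ⊔ Y) := le_inf hX le_sup_left
  have hsup : T ⊓ (X ⊔ Y) ⊔ Y = X ⊔ Y :=
    le_antisymm (sup_le inf_le_right le_sup_right) (sup_le_sup_right hXD Y)
  have : FiniteDimensional K Y := finiteDimensional_of_le hY
  have hrank : finrank K ↥(T ⊓ (X ⊔ Y)) * finrank K Y = finrank K X * finrank K Y := by
    rw [← (h.of_le inf_le_left hY).finrank_sup, ← (h.of_le hX hY).finrank_sup, hsup]
  exact (eq_of_le_of_finrank_le hXD (Nat.eq_of_mul_eq_mul_right finrank_pos hrank).le).symm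

theorem inf_sup_eq_right (h : T.LinearDisjoint U) (hX : X ≤ T) (hY : Y ≤ U) :
    U ⊓ (X ⊔ Y) = Y := by
  rw [sup_comm]
  exact h.symm.inf_sup_eq_left hY hX

theorem eq_and_eq_of_sup_eq (h : T.LinearDisjoint U) (hX : X ≤ T) (hY : Y ≤ U) (hX' : X' ≤ T)
    (hY' : Y' ≤ U) (hXY : X ⊔ Y = X' ⊔ Y') : X = X' ∧ Y = Y' := by
  constructor
  · rw [← h.inf_sup_eq_left hX hY, hXY, h.inf_sup_eq_left hX' hY']
  · rw [← h.inf_sup_eq_right hX hY, hXY, h.inf_sup_eq_right hX' hY']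

end LinearDisjoint

section Galois

variable [IsGalois K Kbar]

theorem exists_mem_fixingSubgroup_eqOn (T Z : IntermediateField K Kbar) [IsGalois K T]
    [FiniteDimensional K T] {σ : Gal(Kbar/K)} (hσ : σ ∈ (T ⊓ Z).fixingSubgroup) :
    ∃ u ∈ Z.fixingSubgroup, Set.EqOn u σ T := by
  let H := Z.fixingSubgroup.map (AlgEquiv.restrictNormalHom T)
  have hfix : lift (fixedField H) = Z ⊓ T := by
    rw [← InfiniteGalois.restrict_fixedField, InfiniteGalois.fixedField_fixingSubgroup]
  have hσH : AlgEquiv.restrictNormalHom T σ ∈ H := by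
    rw [← fixingSubgroup_fixedField H, mem_fixingSubgroup_iff]
    intro t ht
    have htZ : (t : Kbar) ∈ T ⊓ Z := inf_comm Z T ▸ hfix ▸ (mem_lift t).2 ht
    exact Subtype.ext ((AlgEquiv.restrictNormalHom_apply T σ t).trans (hσ ⟨t, htZ⟩))
  obtain ⟨u, hu, hur⟩ := hσH
  refine ⟨u, hu, fun t ht => ?_⟩
  have := congrArg (fun g : Gal(T/K) => (g ⟨t, ht⟩ : Kbar)) hur
  simpa only [AlgEquiv.restrictNormalHom_apply] using this

theorem le_inf_sup_sup_inf_sup (T U Z : IntermediateField K Kbar) [IsGalois K T] [IsGalois K U]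
    [FiniteDimensional K T] [FiniteDimensional K U] (hZ : Z ≤ T ⊔ U) :
    Z ≤ T ⊓ (Z ⊔ U) ⊔ U ⊓ (Z ⊔ T) := by
  intro x hx
  rw [← InfiniteGalois.fixedField_fixingSubgroup (T ⊓ (Z ⊔ U) ⊔ U ⊓ (Z ⊔ T)), mem_fixedField_iff]
  intro σ hσ
  rw [fixingSubgroup_sup] at hσ
  -- split `σ = u * (w * z)` with `u`, `w` fixing `Z` and `z` fixing `T ⊔ U ≥ Z`
  obtain ⟨u, hu, huσ⟩ := exists_mem_fixingSubgroup_eqOn T (Z ⊔ U) hσ.1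
  rw [fixingSubgroup_sup] at hu
  have hvB : u⁻¹ * σ ∈ (U ⊓ (Z ⊔ T)).fixingSubgroup :=
    mul_mem (fixingSubgroup_antitone inf_le_left (inv_mem hu.2)) hσ.2
  obtain ⟨w, hw, hwv⟩ := exists_mem_fixingSubgroup_eqOn U (Z ⊔ T) hvB
  rw [fixingSubgroup_sup] at hw
  set z := w⁻¹ * (u⁻¹ * σ)
  have hz : z ∈ (T ⊔ U).fixingSubgroup := by
    rw [fixingSubgroup_sup]
    refine ⟨(mem_fixingSubgroup_iff _ _).2 fun t ht => ?_,
      (mem_fixingSubgroup_iff _ _).2 fun y hy => ?_⟩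
    · simp only [z, AlgEquiv.mul_apply, ← huσ ht, AlgEquiv.coe_inv, AlgEquiv.symm_apply_apply,
        (mem_fixingSubgroup_iff _ _).1 (inv_mem hw.2) t ht]
    · simp only [z, AlgEquiv.mul_apply, ← hwv hy, AlgEquiv.coe_inv, AlgEquiv.symm_apply_apply]
  have hσz : σ = u * (w * z) := by simp only [z, mul_inv_cancel_left]
  calc σ x = u (w (z x)) := by rw [hσz]; rfl
    _ = x := by
      rw [(mem_fixingSubgroup_iff _ _).1 hz x (hZ hx), (mem_fixingSubgroup_iff _ _).1 hw.1 x hx,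
        (mem_fixingSubgroup_iff _ _).1 hu.1 x hx]

end Galois

end IntermediateField

section GaloisPair

variable {K Kbar : Type*} [Field K] [Field Kbar] [Algebra K Kbar] [IsGalois K Kbar]
  {C X C' X' : IntermediateField K Kbar}

theorem isGaloisPair_iff (h : C ≤ X) :
    IsGaloisPair K Kbar C X ↔ ∀ σ ∈ C.fixingSubgroup, X.map (σ : Kbar →ₐ[K] Kbar) ≤ X := by
  have hGalois : IsGaloisPair K Kbar C X ↔ Normal C (extendScalars h) :=
    ⟨fun ⟨_, hg⟩ => hg.to_normal, fun hn => ⟨h, { }⟩⟩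
  rw [hGalois, normal_iff_forall_map_le']
  constructor
  · rintro H σ hσ _ ⟨x, hx, rfl⟩
    exact H (fixingSubgroupEquiv C ⟨σ, hσ⟩) ⟨x, hx, rfl⟩
  · rintro H σ _ ⟨x, hx, rfl⟩
    exact H _ ((fixingSubgroupEquiv C).symm σ).2 ⟨x, hx, rfl⟩

theorem IsGaloisPair.map_le (h : IsGaloisPair K Kbar C X) {σ : Gal(Kbar/K)}
    (hσ : σ ∈ C.fixingSubgroup) : X.map (σ : Kbar →ₐ[K] Kbar) ≤ X :=
  (isGaloisPair_iff h.1).1 h σ hσ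

theorem IsGaloisPair.refl (E : IntermediateField K Kbar) : IsGaloisPair K Kbar E E := by
  refine (isGaloisPair_iff le_rfl).2 fun σ hσ => ?_
  rintro _ ⟨x, hx, rfl⟩
  change σ x ∈ E
  rwa [(IntermediateField.mem_fixingSubgroup_iff _ σ).1 hσ x hx]

theorem IsGaloisPair.sup (h : IsGaloisPair K Kbar C X) (h' : IsGaloisPair K Kbar C' X') :
    IsGaloisPair K Kbar (C ⊔ C') (X ⊔ X') := by
  refine (isGaloisPair_iff (sup_le_sup h.1 h'.1)).2 fun σ hσ => ?_
  rw [fixingSubgroup_sup] at hσ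
  rw [IntermediateField.map_sup]
  exact sup_le_sup (h.map_le hσ.1) (h'.map_le hσ.2)

theorem IsGaloisPair.inf (T : IntermediateField K Kbar) [IsGalois K T] [FiniteDimensional K T]
    (h : IsGaloisPair K Kbar C X) : IsGaloisPair K Kbar (T ⊓ C) (T ⊓ X) := by
  refine (isGaloisPair_iff (inf_le_inf_left T h.1)).2 fun σ hσ => ?_
  obtain ⟨u, hu, huσ⟩ := exists_mem_fixingSubgroup_eqOn T C hσ
  rintro _ ⟨x, ⟨hxT, hxX⟩, rfl⟩
  refine ⟨normal_iff_forall_map_le'.1 inferInstance σ ⟨x, hxT, rfl⟩, ?_⟩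
  change σ x ∈ X
  rw [← huσ hxT]
  exact h.map_le hu ⟨x, hxX, rfl⟩

end GaloisPair

theorem AscStep.finrank_inf_sup_le {K Kbar : Type*} [Field K] [Field Kbar] [Algebra K Kbar]
    [IsGalois K Kbar] {T U L J E E₁ F Z : IntermediateField K Kbar} [IsGalois K T]
    [FiniteDimensional K T] [FiniteDimensional K U] (hd : T.LinearDisjoint U) (hL : L ≤ T)
    (hJ : J ≤ U) (hF : F ≤ U) (hE : AscStep K Kbar L E E₁) (hEFZ : E ⊔ F ≤ Z) (hZ : Z ≤ L ⊔ J)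
    (hpair : IsGaloisPair K Kbar (E ⊔ F) Z) : finrank K ↥(T ⊓ (Z ⊔ U)) ≤ finrank K E₁ := by
  have hET : E ≤ T := hE.1.trans (hE.2.1.trans hL)
  refine hE.2.2.2 _ (le_inf hET (le_sup_left.trans (hEFZ.trans le_sup_left))) ?_ ?_
  · calc T ⊓ (Z ⊔ U) ≤ T ⊓ (L ⊔ U) :=
          inf_le_inf_left T (sup_le (hZ.trans (sup_le_sup_left hJ L)) le_sup_right)
      _ = L := hd.inf_sup_eq_left hL le_rfl
  · have hpairT := (hpair.sup (IsGaloisPair.refl U)).inf T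
    rwa [sup_assoc, sup_eq_right.2 hF, hd.inf_sup_eq_left hET le_rfl] at hpairT

section Compositum

variable {K Kbar : Type*} [Field K] [Field Kbar] [Algebra K Kbar] [IsGalois K Kbar]
  {T U : IntermediateField K Kbar} [IsGalois K T] [IsGalois K U] [FiniteDimensional K T]
  [FiniteDimensional K U]

theorem DescStep.sup (hTU : T ⊓ U = ⊥) {X X₁ Y Y₁ : IntermediateField K Kbar} (hX : X ≤ T)
    (hY : Y ≤ U) (hXX₁ : DescStep K Kbar X X₁) (hYY₁ : DescStep K Kbar Y Y₁) :
    DescStep K Kbar (X ⊔ Y) (X₁ ⊔ Y₁) := by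
  have hd : T.LinearDisjoint U := .of_inf_eq_bot hTU
  refine ⟨sup_le_sup hXX₁.1 hYY₁.1, hXX₁.2.1.sup hYY₁.2.1, fun N hN hpair => ?_⟩
  have hTN : T ⊓ N ≤ X := hd.inf_sup_eq_left hX hY ▸ inf_le_inf_left T hN
  have hUN : U ⊓ N ≤ Y := hd.inf_sup_eq_right hX hY ▸ inf_le_inf_left U hN
  have hpairT : IsGaloisPair K Kbar (T ⊓ N) X := hd.inf_sup_eq_left hX hY ▸ hpair.inf T
  have hpairU : IsGaloisPair K Kbar (U ⊓ N) Y := hd.inf_sup_eq_right hX hY ▸ hpair.inf U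
  have : FiniteDimensional K N :=
    finiteDimensional_of_le (hN.trans (sup_le_sup hX hY) : N ≤ T ⊔ U)
  calc finrank K ↥(X₁ ⊔ Y₁) = finrank K X₁ * finrank K Y₁ :=
        (hd.of_le (hXX₁.1.trans hX) (hYY₁.1.trans hY)).finrank_sup
    _ ≤ finrank K ↥(T ⊓ N) * finrank K ↥(U ⊓ N) :=
        Nat.mul_le_mul (hXX₁.2.2 _ hTN hpairT) (hYY₁.2.2 _ hUN hpairU)
    _ = finrank K ↥(T ⊓ N ⊔ U ⊓ N) := (hd.of_le inf_le_left inf_le_left).finrank_sup.symm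
    _ ≤ finrank K N := finrank_le_of_le_right (sup_le inf_le_right inf_le_right)

theorem AscStep.sup (hTU : T ⊓ U = ⊥) {L J E E₁ F F₁ : IntermediateField K Kbar} (hL : L ≤ T)
    (hJ : J ≤ U) (hE : AscStep K Kbar L E E₁) (hF : AscStep K Kbar J F F₁) :
    AscStep K Kbar (L ⊔ J) (E ⊔ F) (E₁ ⊔ F₁) := by
  have hd : T.LinearDisjoint U := .of_inf_eq_bot hTU
  refine ⟨sup_le_sup hE.1 hF.1, sup_le_sup hE.2.1 hF.2.1, hE.2.2.1.sup hF.2.2.1,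
    fun Z hEFZ hZ hpair => ?_⟩
  have : FiniteDimensional K ↥(T ⊓ (Z ⊔ U) ⊔ U ⊓ (Z ⊔ T)) :=
    finiteDimensional_of_le (sup_le_sup inf_le_left inf_le_left : _ ≤ T ⊔ U)
  have hTbound := hE.finrank_inf_sup_le hd hL hJ (hF.1.trans (hF.2.1.trans hJ)) hEFZ hZ hpair
  have hUbound := hF.finrank_inf_sup_le hd.symm hJ hL (hE.1.trans (hE.2.1.trans hL))
    (sup_comm E F ▸ hEFZ) (sup_comm L J ▸ hZ) (sup_comm E F ▸ hpair)
  calc finrank K Z ≤ finrank K ↥(T ⊓ (Z ⊔ U) ⊔ U ⊓ (Z ⊔ T)) :=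
        finrank_le_of_le_right (le_inf_sup_sup_inf_sup T U Z (hZ.trans (sup_le_sup hL hJ)))
    _ = finrank K ↥(T ⊓ (Z ⊔ U)) * finrank K ↥(U ⊓ (Z ⊔ T)) :=
        (hd.of_le inf_le_left inf_le_left).finrank_sup
    _ ≤ finrank K E₁ * finrank K F₁ := Nat.mul_le_mul hTbound hUbound
    _ = finrank K ↥(E₁ ⊔ F₁) := (hd.of_le (hE.2.1.trans hL) (hF.2.1.trans hJ)).finrank_sup.symm

end Compositum

theorem forall_rel_succ_of_stabilizes {α : Type*} {R : α → α → Prop} {f : ℕ → α} {k : ℕ}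
    (hstep : ∀ i < k, R (f i) (f (i + 1))) (hconst : ∀ i, k ≤ i → f i = f k)
    (hterm : R (f k) (f k)) (i : ℕ) : R (f i) (f (i + 1)) := by
  rcases lt_or_ge i k with hi | hi
  · exact hstep i hi
  · rw [hconst i hi, hconst (i + 1) (by omega)]
    exact hterm

/-- Suppose `M/K` is obtained by strong general magnification from `L/K`
through `J/K`.  If `N` (of length `k`) and `N'` (of length `k'`) are the unique descending
chains of `L/K` and `J/K`, extended constantly beyond their lengths, and `F` (of length `l`)
and `F'` (of length `l'`) are the unique ascending chains of `L/K` and `J/K`, extended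
constantly, then the unique descending chain of `M/K` has `i`-th field `N i ⊔ N' i`
(for `i ≤ max k k'`) and the unique ascending chain of `M/K` has `j`-th field `F j ⊔ F' j`
(for `j ≤ max l l'`). -/
theorem strong_general_magnification_unique_chains
    (K Kbar : Type*) [Field K] [PerfectField K] [Field Kbar] [Algebra K Kbar]
    [IsAlgClosure K Kbar]
    (M L J : IntermediateField K Kbar) [FiniteDimensional K ↥M]
    (hSGM : IsSGMvia K Kbar M L J)
    (N N' F F' : ℕ → IntermediateField K Kbar) (k k' l l' : ℕ)
    -- the unique descending chain of L/K
    (hN0 : N 0 = L)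
    (hNstep : ∀ i < k, DescStep K Kbar (N i) (N (i + 1)))
    (hNstrict : ∀ i < k, N (i + 1) ≠ N i)
    (hNconst : ∀ i, k ≤ i → N i = N k)
    (hNterm : DescStep K Kbar (N k) (N k))
    -- the unique descending chain of J/K
    (hN'0 : N' 0 = J)
    (hN'step : ∀ i < k', DescStep K Kbar (N' i) (N' (i + 1)))
    (hN'strict : ∀ i < k', N' (i + 1) ≠ N' i)
    (hN'const : ∀ i, k' ≤ i → N' i = N' k')
    (hN'term : DescStep K Kbar (N' k') (N' k'))
    -- the unique ascending chain of L/K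
    (hF0 : F 0 = ⊥)
    (hFstep : ∀ j < l, AscStep K Kbar L (F j) (F (j + 1)))
    (hFstrict : ∀ j < l, F j ≠ F (j + 1))
    (hFconst : ∀ j, l ≤ j → F j = F l)
    (hFterm : AscStep K Kbar L (F l) (F l))
    -- the unique ascending chain of J/K
    (hF'0 : F' 0 = ⊥)
    (hF'step : ∀ j < l', AscStep K Kbar J (F' j) (F' (j + 1)))
    (hF'strict : ∀ j < l', F' j ≠ F' (j + 1))
    (hF'const : ∀ j, l' ≤ j → F' j = F' l')
    (hF'term : AscStep K Kbar J (F' l') (F' l')) :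
    -- the unique descending chain of M/K is i ↦ N i ⊔ N' i
    (N 0 ⊔ N' 0 = M) ∧
    (∀ i < max k k', DescStep K Kbar (N i ⊔ N' i) (N (i + 1) ⊔ N' (i + 1)) ∧
      N (i + 1) ⊔ N' (i + 1) ≠ N i ⊔ N' i) ∧
    DescStep K Kbar (N (max k k') ⊔ N' (max k k')) (N (max k k') ⊔ N' (max k k')) ∧
    -- the unique ascending chain of M/K is j ↦ F j ⊔ F' j
    (F 0 ⊔ F' 0 = ⊥) ∧
    (∀ j < max l l', AscStep K Kbar M (F j ⊔ F' j) (F (j + 1) ⊔ F' (j + 1)) ∧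
      F j ⊔ F' j ≠ F (j + 1) ⊔ F' (j + 1)) ∧
    AscStep K Kbar M (F (max l l') ⊔ F' (max l l')) (F (max l l') ⊔ F' (max l l')) := by
  obtain ⟨hLM, -, hJ, hdisj, rfl⟩ := hSGM
  have : IsGalois K Kbar := { }
  have : FiniteDimensional K L := finiteDimensional_of_le hLM
  change normalClosure K L Kbar ⊓ normalClosure K J Kbar = ⊥ at hdisj
  have hd := LinearDisjoint.of_inf_eq_bot hdisj
  have hNall := forall_rel_succ_of_stabilizes hNstep hNconst hNterm
  have hN'all := forall_rel_succ_of_stabilizes hN'step hN'const hN'term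
  have hFall := forall_rel_succ_of_stabilizes hFstep hFconst hFterm
  have hF'all := forall_rel_succ_of_stabilizes hF'step hF'const hF'term
  have hNT (i : ℕ) : N i ≤ normalClosure K L Kbar :=
    (antitone_nat_of_succ_le (fun i => (hNall i).1) (Nat.zero_le i)).trans
      (hN0 ▸ le_normalClosure L)
  have hN'U (i : ℕ) : N' i ≤ normalClosure K J Kbar :=
    (antitone_nat_of_succ_le (fun i => (hN'all i).1) (Nat.zero_le i)).trans
      (hN'0 ▸ le_normalClosure J)
  have hFT (j : ℕ) : F j ≤ normalClosure K L Kbar :=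
    (hFall j).1.trans ((hFall j).2.1.trans (le_normalClosure L))
  have hF'U (j : ℕ) : F' j ≤ normalClosure K J Kbar :=
    (hF'all j).1.trans ((hF'all j).2.1.trans (le_normalClosure J))
  refine ⟨by rw [hN0, hN'0], fun i hi => ⟨(hNall i).sup hdisj (hNT i) (hN'U i) (hN'all i),
    fun h => ?_⟩, ?_, by rw [hF0, hF'0, sup_bot_eq], fun j hj => ⟨(hFall j).sup hdisj
    (le_normalClosure L) (le_normalClosure J) (hF'all j), fun h => ?_⟩, ?_⟩
  · obtain ⟨hNi, hN'i⟩ := hd.eq_and_eq_of_sup_eq (hNT _) (hN'U _) (hNT _) (hN'U _) h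
    rcases lt_max_iff.1 hi with hi | hi
    exacts [hNstrict i hi hNi, hN'strict i hi hN'i]
  · rw [hNconst _ (le_max_left k k'), hN'const _ (le_max_right k k')]
    exact hNterm.sup hdisj (hNT k) (hN'U k') hN'term
  · obtain ⟨hFj, hF'j⟩ := hd.eq_and_eq_of_sup_eq (hFT _) (hF'U _) (hFT _) (hF'U _) h
    rcases lt_max_iff.1 hj with hj | hj
    exacts [hFstrict j hj hFj, hF'strict j hj hF'j]
  · rw [hFconst _ (le_max_left l l'), hF'const _ (le_max_right l l')]
    exact hFterm.sup hdisj (le_normalClosure L) (le_normalClosure J) hF'term
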